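/- In the ring ℚ⟦X⟧ of formal power series over ℚ, let h̄(X) = (1-X^2)^{-1} · (1-X^4)^{-1} · (1-X^6)^{-2} · (1-X^8)^{-1} · (1-X^{10})^{-2} · (1-X^{12})^{-1} · (1-X^{14})^{-1} · (1-X^{16})^{21} · (1-X^{18})^{124} · (1-X^{20})^{1202}. Then the coefficients of h̄(X) in degrees 0 through 20 are: 1 in degree 0; 1, 2, 4, 6, 10, 16, 23, 13, -96, -1299 in degrees 2, 4, 6, 8, 10, 12, 14, 16, 18, 20 respectively; and 0 in all odd degrees up to 19. -/

import Mathlib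

/-!
Every factor of `h̄` is a series in `X²`, so `h̄(X) = hBarY(X²)`, where `hBarY` has the same
exponents on the halved degrees. Hence the odd coefficients of `h̄` vanish and its coefficient in
degree `2n` is that of `hBarY` in degree `n`. Modulo `X¹¹`, each `(1 - Xᵏ)⁻¹` is a truncated
geometric series and each `(1 - Xᵏ)ᵐ` with `2k ≥ 11` is `1 - m Xᵏ`, so the first eleven
coefficients of `hBarY` are read off a polynomial product.
-/

open PowerSeries

/-- The series `h̄(X) = ∏ (1-X^{2n-2})^{-e(Out Fₙ)}` for `2 ≤ n ≤ 11`. -/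
noncomputable def hBar : PowerSeries ℚ :=
  (1 - (X : ℚ⟦X⟧) ^ 2)⁻¹ * (1 - X ^ 4)⁻¹ * ((1 - X ^ 6)⁻¹) ^ 2 *
    (1 - X ^ 8)⁻¹ * ((1 - X ^ 10)⁻¹) ^ 2 * (1 - X ^ 12)⁻¹ * (1 - X ^ 14)⁻¹ *
    (1 - X ^ 16) ^ 21 * (1 - X ^ 18) ^ 124 * (1 - X ^ 20) ^ 1202

open Finset

theorem one_sub_pow_smodEq {R : Type*} [CommRing R] (y : R) (m : ℕ) :
    (1 - y) ^ m ≡ 1 - m * y [SMOD Ideal.span {y ^ 2}] := by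
  rw [SModEq.sub_mem, Ideal.mem_span_singleton]
  induction m with
  | zero => simp
  | succ n ih =>
    obtain ⟨c, hc⟩ := ih
    exact ⟨(1 - y) * c + n, by push_cast; linear_combination (1 - y) * hc⟩

namespace PowerSeries

variable {R K : Type*} [CommRing R] [Field K]

theorem span_X_pow_le_span_X_pow {m n : ℕ} (h : n ≤ m) :
    Ideal.span {(X : R⟦X⟧) ^ m} ≤ Ideal.span {X ^ n} :=
  Ideal.span_singleton_le_span_singleton.2 (pow_dvd_pow X h)

theorem coeff_eq_of_smodEq_X_pow {f g : R⟦X⟧} {N n : ℕ}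
    (h : f ≡ g [SMOD Ideal.span {X ^ N}]) (hn : n < N) : coeff n f = coeff n g := by
  rw [SModEq.sub_mem, Ideal.mem_span_singleton, X_pow_dvd_iff] at h
  simpa [sub_eq_zero] using h n hn

theorem one_sub_X_pow_pow_smodEq {N k : ℕ} (h : N ≤ k * 2) (m : ℕ) :
    (1 - (X : R⟦X⟧) ^ k) ^ m ≡ 1 - (m : R⟦X⟧) * X ^ k [SMOD Ideal.span {X ^ N}] :=
  (one_sub_pow_smodEq _ m).mono (by rw [← pow_mul]; exact span_X_pow_le_span_X_pow h)

theorem expand_inv (p : ℕ) (hp : p ≠ 0) (φ : K⟦X⟧) :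
    expand p hp φ⁻¹ = (expand p hp φ)⁻¹ := by
  by_cases h : constantCoeff φ = 0
  · rw [inv_eq_zero.2 h, map_zero, eq_comm, inv_eq_zero, constantCoeff_expand, h]
  · rw [eq_inv_iff_mul_eq_one (by rwa [constantCoeff_expand]), ← map_mul,
      PowerSeries.inv_mul_cancel _ h, map_one]

theorem inv_one_sub_smodEq_geom_sum {φ : K⟦X⟧} (hφ : constantCoeff φ = 0) (m : ℕ) :
    (1 - φ)⁻¹ ≡ ∑ j ∈ range m, φ ^ j [SMOD Ideal.span {φ ^ m}] := by
  have hinv : (1 - φ)⁻¹ * (1 - φ) = 1 := PowerSeries.inv_mul_cancel _ (by simp [hφ])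
  rw [SModEq.sub_mem, Ideal.mem_span_singleton]
  refine ⟨(1 - φ)⁻¹, ?_⟩
  calc (1 - φ)⁻¹ - ∑ j ∈ range m, φ ^ j
      = (1 - φ)⁻¹ * (1 - (1 - φ) * ∑ j ∈ range m, φ ^ j) := by
        rw [mul_sub, ← mul_assoc, hinv]; ring
    _ = φ ^ m * (1 - φ)⁻¹ := by rw [mul_neg_geom_sum]; ring

theorem inv_one_sub_X_pow_smodEq {N k : ℕ} (m : ℕ) (hk : k ≠ 0) (h : N ≤ k * m) :
    (1 - (X : K⟦X⟧) ^ k)⁻¹ ≡ ∑ j ∈ range m, (X ^ k) ^ j [SMOD Ideal.span {X ^ N}] :=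
  (inv_one_sub_smodEq_geom_sum (by simp [hk]) m).mono
    (by rw [← pow_mul]; exact span_X_pow_le_span_X_pow h)

end PowerSeries

noncomputable def hBarY : ℚ⟦X⟧ :=
  (1 - (X : ℚ⟦X⟧))⁻¹ * (1 - X ^ 2)⁻¹ * ((1 - X ^ 3)⁻¹) ^ 2 *
    (1 - X ^ 4)⁻¹ * ((1 - X ^ 5)⁻¹) ^ 2 * (1 - X ^ 6)⁻¹ * (1 - X ^ 7)⁻¹ *
    (1 - X ^ 8) ^ 21 * (1 - X ^ 9) ^ 124 * (1 - X ^ 10) ^ 1202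

theorem expand_hBarY : expand 2 two_ne_zero hBarY = hBar := by
  simp only [hBarY, hBar, map_mul, map_pow, map_sub, map_one, expand_inv, expand_X, ← pow_mul]

theorem hBarY_smodEq_trunc : hBarY ≡
    (∑ j ∈ range 11, X ^ j) * (∑ j ∈ range 6, (X ^ 2) ^ j) *
      (∑ j ∈ range 4, (X ^ 3) ^ j) ^ 2 * (∑ j ∈ range 3, (X ^ 4) ^ j) *
      (∑ j ∈ range 3, (X ^ 5) ^ j) ^ 2 * (∑ j ∈ range 2, (X ^ 6) ^ j) *
      (∑ j ∈ range 2, (X ^ 7) ^ j) *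
      (1 - 21 * X ^ 8) * (1 - 124 * X ^ 9) * (1 - 1202 * X ^ 10) [SMOD Ideal.span {X ^ 11}] := by
  unfold hBarY
  gcongr
  · exact inv_one_sub_smodEq_geom_sum constantCoeff_X 11
  all_goals first
    | exact inv_one_sub_X_pow_smodEq _ (by norm_num) (by norm_num)
    | exact_mod_cast one_sub_X_pow_pow_smodEq (by norm_num) _

theorem hBarY_smodEq :
    hBarY ≡ 1 + X + 2 * X ^ 2 + 4 * X ^ 3 + 6 * X ^ 4 + 10 * X ^ 5 + 16 * X ^ 6 + 23 * X ^ 7 +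
      13 * X ^ 8 - 96 * X ^ 9 - 1299 * X ^ 10 [SMOD Ideal.span {X ^ 11}] := by
  refine hBarY_smodEq_trunc.trans ?_
  rw [SModEq.sub_mem, Ideal.mem_span_singleton]
  simp only [sum_range_succ, sum_range_zero]
  ring_nf
  -- the terms of degree `≤ 10` cancel, every remaining monomial is a multiple of `X ^ 11`
  repeat' first
    | apply dvd_add | apply dvd_sub | apply dvd_neg.2
    | exact Dvd.dvd.mul_right (pow_dvd_pow _ (by norm_num)) _

/-- The coefficients of `h̄(X)` in degrees `0` through `20`: `1` in degree `0`;
`1, 2, 4, 6, 10, 16, 23, 13, -96, -1299` in degrees `2, 4, …, 20`; and `0` in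
all odd degrees up to `19`. -/
theorem coeffs_hBar :
    PowerSeries.coeff (R := ℚ) 0 hBar = 1 ∧
    PowerSeries.coeff (R := ℚ) 2 hBar = 1 ∧
    PowerSeries.coeff (R := ℚ) 4 hBar = 2 ∧
    PowerSeries.coeff (R := ℚ) 6 hBar = 4 ∧
    PowerSeries.coeff (R := ℚ) 8 hBar = 6 ∧
    PowerSeries.coeff (R := ℚ) 10 hBar = 10 ∧
    PowerSeries.coeff (R := ℚ) 12 hBar = 16 ∧
    PowerSeries.coeff (R := ℚ) 14 hBar = 23 ∧
    PowerSeries.coeff (R := ℚ) 16 hBar = 13 ∧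
    PowerSeries.coeff (R := ℚ) 18 hBar = -96 ∧
    PowerSeries.coeff (R := ℚ) 20 hBar = -1299 ∧
    ∀ i, Odd i → i ≤ 19 → PowerSeries.coeff (R := ℚ) i hBar = 0 := by
  have coeff_hBar (n : ℕ) : coeff n hBar = if 2 ∣ n then coeff (n / 2) hBarY else 0 := by
    rw [← expand_hBarY, coeff_expand]
  refine ⟨?_, ?_, ?_, ?_, ?_, ?_, ?_, ?_, ?_, ?_, ?_,
    fun i hi _ ↦ by rw [coeff_hBar, if_neg hi.not_two_dvd_nat]⟩ <;>
  · rw [coeff_hBar, if_pos (by norm_num), coeff_eq_of_smodEq_X_pow hBarY_smodEq (by norm_num)]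
    simp [← map_ofNat C, coeff_X, coeff_one]
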